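/- arXiv:2508.12739 — 2 statements merged into one kernel-verified Lean document; each statement's English description precedes it below -/
import Mathlib

section
/- For every nonnegative integer n, Q_{12}^2(3n+2) ≡ 0 (mod 2); that is, the number of partitions of 3n+2 into distinct parts with no part congruent to 2 or 10 modulo 12 is even. -/
/-- `Q t s n` is the number of partitions of `n` into distinct parts such that
no part is congruent to `s` or `t - s` modulo `t`. -/
noncomputable def Q (t s n : ℕ) : ℕ :=
  Nat.card {p : n.Partition // p.parts.Nodup ∧
    ∀ x ∈ p.parts, x % t ≠ s % t ∧ x % t ≠ (t - s) % t}

/-!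
Write `F_S` for the generating function of partitions into distinct parts from `S` and
`E = ∏ (1 - qᵏ)`. Over `𝔽₂` we have `1 + qᵏ = 1 - qᵏ` and `f(q)² = f(q²)`, so `F_ℕ = E` and
`F_{dℕ} = E(q^d)`; splitting and regrouping sets of parts gives
`F_A · F_{6ℕ} = F_{A∖6ℕ} · F_{12ℕ} = F_odd · F_{4ℕ} = F_odd · F_{2ℕ}² = E³`
for `A = {x | x ≢ 2, 10 (mod 12)}`. As `E(q⁶)` is a unit in `𝔽₂⟦q⁶⟧`, the coefficients of `F_A`
on `3n + 2` vanish as soon as those of `E³ = E(q) E(q²)` do. By Euler's pentagonal number theorem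
the coefficient of `q^N` in `E(q) E(q²)` is the parity of the number of `(i, j) ∈ ℤ²` with
`P(i) + 2 P(j) = N`, `P(k) = k(3k - 1)/2`, and for `N ≡ 2 (mod 3)` these pairs are matched by a
fixed-point-free involution.
-/

open Finset PowerSeries
open scoped PowerSeries.WithPiTopology

namespace PowerSeries

variable {R : Type*} [CommRing R] {d : ℕ} (hd : d ≠ 0)

theorem _root_.HasProd.expand [TopologicalSpace R] {ι : Type*} {f : ι → R⟦X⟧} {a : R⟦X⟧}
    (h : HasProd f a) : HasProd (fun i ↦ expand d hd (f i)) (expand d hd a) := by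
  rw [HasProd, WithPiTopology.tendsto_iff_coeff_tendsto] at h ⊢
  intro n
  simp_rw [← map_prod, coeff_expand]
  split_ifs
  · exact h _
  · exact tendsto_const_nhds

theorem coeff_mul_expand_eq_zero {r : ℕ} {f : R⟦X⟧} (hf : ∀ n, n ≡ r [MOD d] → coeff n f = 0)
    (g : R⟦X⟧) {n : ℕ} (hn : n ≡ r [MOD d]) : coeff n (f * expand d hd g) = 0 := by
  rw [coeff_mul]
  refine sum_eq_zero fun ⟨a, b⟩ hab ↦ ?_
  rw [coeff_expand]
  split_ifs with hb
  · obtain ⟨k, rfl⟩ := hb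
    rw [HasAntidiagonal.mem_antidiagonal] at hab
    rw [← hab] at hn
    rw [hf a (by simpa [Nat.ModEq] using hn), zero_mul]
  · exact mul_zero _

theorem expand_zmod {p : ℕ} [hp : Fact p.Prime] (f : (ZMod p)⟦X⟧) :
    expand p hp.out.ne_zero f = f ^ p := by
  have := MvPowerSeries.map_frobenius_expand (R := ZMod p) p hp.out.ne_zero (f := f)
  rwa [ZMod.frobenius_zmod, MvPowerSeries.map_id] at this

end PowerSeries

namespace Nat.Partition

noncomputable def distinctGenFun (R : Type*) [CommSemiring R] (p : ℕ → Prop) [DecidablePred p] :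
    R⟦X⟧ :=
  PowerSeries.mk fun n ↦ (#(distincts n ∩ restricted n p) : R)

section CommSemiring

variable {R : Type*} [CommSemiring R]

theorem hasProd_distinctGenFun [TopologicalSpace R] [T2Space R] (p : ℕ → Prop)
    [DecidablePred p] :
    HasProd (fun i ↦ if p (i + 1) then 1 + X ^ (i + 1) else 1) (distinctGenFun R p) := by
  convert hasProd_genFun (fun i c ↦ if c = 1 ∧ p i then (1 : R) else 0) using 1
  · ext1 i
    rw [tsum_eq_single 0 (fun j hj ↦ by simp [hj])]
    split_ifs <;> simp_all
  · ext n
    simp_rw [distinctGenFun, coeff_genFun, coeff_mk, Finsupp.prod, prod_boole, sum_boole]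
    congr 2
    ext q
    simp only [distincts, restricted, mem_inter, mem_filter, mem_univ, true_and,
      Multiset.nodup_iff_count_le_one, Multiset.toFinsupp_support, Multiset.mem_toFinset,
      Multiset.toFinsupp_apply]
    grind [Multiset.count_pos, Multiset.count_eq_zero]

theorem distinctGenFun_congr {p q : ℕ → Prop} [DecidablePred p] [DecidablePred q]
    (h : ∀ x, p x ↔ q x) : distinctGenFun R p = distinctGenFun R q := by
  obtain rfl : p = q := funext fun x ↦ propext (h x)
  congr

theorem distinctGenFun_or {p q : ℕ → Prop} [DecidablePred p] [DecidablePred q]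
    (hpq : ∀ x, ¬(p x ∧ q x)) :
    distinctGenFun R (fun x ↦ p x ∨ q x) = distinctGenFun R p * distinctGenFun R q := by
  let : TopologicalSpace R := ⊥
  have : DiscreteTopology R := ⟨rfl⟩
  have hprod := (hasProd_distinctGenFun (R := R) p).mul (hasProd_distinctGenFun q)
  refine (hasProd_distinctGenFun _).unique (hprod.congr_fun fun i ↦ ?_)
  by_cases hp : p (i + 1) <;> by_cases hq : q (i + 1) <;> simp_all

end CommSemiring

section CommRing

variable {R : Type*} [CommRing R] {d : ℕ} (hd : d ≠ 0)

theorem expand_distinctGenFun (p : ℕ → Prop) [DecidablePred p] :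
    expand d hd (distinctGenFun R p) = distinctGenFun R (fun x ↦ d ∣ x ∧ p (x / d)) := by
  let : TopologicalSpace R := ⊥
  have : DiscreteTopology R := ⟨rfl⟩
  have hinj : Function.Injective (fun i ↦ d * i + (d - 1)) := fun i j h ↦ by
    simpa [hd] using h
  have hprod := (hasProd_distinctGenFun (R := R) p).expand hd
  refine ((hinj.hasProd_iff ?_).1 (hprod.congr_fun fun i ↦ ?_)).unique
    (hasProd_distinctGenFun _)
  · rintro x hx
    rw [if_neg]
    rintro ⟨⟨k, hk⟩, -⟩
    exact hx ⟨k - 1, by cases k <;> grind⟩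
  · have : d * i + (d - 1) + 1 = d * (i + 1) := by grind
    simp [this, hd, apply_ite (expand d hd), pow_mul]

theorem distinctGenFun_dvd :
    distinctGenFun R (d ∣ ·) = expand d hd (distinctGenFun R fun _ ↦ True) := by
  rw [expand_distinctGenFun]
  exact distinctGenFun_congr fun x ↦ by simp

end CommRing

theorem distinctGenFun_true_zmod_two :
    distinctGenFun (ZMod 2) (fun _ ↦ True) = pentagonalSeries (ZMod 2) := by
  have : CharP (ZMod 2)⟦X⟧ 2 := charP_of_injective_algebraMap (C_injective (R := ZMod 2)) 2
  refine (hasProd_distinctGenFun _).unique ?_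
  simpa [CharTwo.sub_eq_add] using PowerSeries.WithPiTopology.hasProd_one_sub_X_pow (ZMod 2)

end Nat.Partition

theorem injective_prodMap_pentagonal :
    Function.Injective (Prod.map pentagonal (fun k ↦ 2 * pentagonal k)) :=
  pentagonal_injective.prodMap fun _ _ h ↦ pentagonal_injective (by simpa using h)

noncomputable def pentagonalPairs (N : ℕ) : Finset (ℤ × ℤ) :=
  (antidiagonal N).preimage _ injective_prodMap_pentagonal.injOn

theorem mem_pentagonalPairs {N : ℕ} {x : ℤ × ℤ} :
    x ∈ pentagonalPairs N ↔ pentagonal x.1 + 2 * pentagonal x.2 = N := by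
  simp [pentagonalPairs]

/-- With `u = 6i - 1`, `v = 6j - 1` the equation `P(i) + 2 P(j) = N` reads
`u² + 2v² = 24N + 3`, and this map is `u + v√-2 ↦ (1 - 2√-2)/3 · (u - v√-2)`, a reflection
(the multiplier has norm one). -/
def pentagonalReflection (x : ℤ × ℤ) : ℤ × ℤ :=
  ((x.1 - 4 * x.2 + 1) / 3, (1 - 2 * x.1 - x.2) / 3)

theorem pentagonalReflection_spec {N : ℕ} (hN : N % 3 = 2) {x : ℤ × ℤ}
    (hx : x ∈ pentagonalPairs N) :
    pentagonalReflection x ∈ pentagonalPairs N ∧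
      pentagonalReflection (pentagonalReflection x) = x ∧ pentagonalReflection x ≠ x := by
  obtain ⟨i, j⟩ := x
  simp only [mem_pentagonalPairs] at hx ⊢
  have hx' : (pentagonal i : ℤ) + 2 * pentagonal j = N := by exact_mod_cast hx
  have hij : i * (3 * i - 1) + 2 * (j * (3 * j - 1)) = 2 * N := by
    linear_combination 2 * hx' - two_mul_natCast_pentagonal i - 2 * two_mul_natCast_pentagonal j
  -- `omega` sees the equation mod 3 once the squares are hidden in one atom
  obtain ⟨K, hK⟩ : ∃ K, i ^ 2 + 2 * j ^ 2 = K := ⟨_, rfl⟩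
  have hlin : 3 * K - i - 2 * j = 2 * N := by linear_combination hij - 3 * hK
  simp only [pentagonalReflection, Prod.mk.injEq, ne_eq]
  refine ⟨?_, by omega, by omega⟩
  obtain ⟨i', hi'⟩ : ∃ i', i - 4 * j + 1 = 3 * i' := ⟨(i - 4 * j + 1) / 3, by omega⟩
  obtain ⟨j', hj'⟩ : ∃ j', 1 - 2 * i - j = 3 * j' := ⟨(1 - 2 * i - j) / 3, by omega⟩
  rw [hi', hj', Int.mul_ediv_cancel_left _ three_ne_zero, Int.mul_ediv_cancel_left _ three_ne_zero]
  have h18 : 18 * ((pentagonal i' : ℤ) + 2 * pentagonal j') = 18 * N := by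
    linear_combination (3 - 3 * (3 * i' + (i - 4 * j + 1))) * hi' +
      (6 - 6 * (3 * j' + (1 - 2 * i - j))) * hj' + 9 * hij +
      9 * two_mul_natCast_pentagonal i' + 18 * two_mul_natCast_pentagonal j'
  omega

theorem even_card_pentagonalPairs {N : ℕ} (hN : N % 3 = 2) : Even #(pentagonalPairs N) := by
  rw [← ZMod.natCast_eq_zero_iff_even, card_eq_sum_ones, Nat.cast_sum, Nat.cast_one]
  exact sum_involution (fun x _ ↦ pentagonalReflection x) (fun _ _ ↦ by decide)
    (fun _ hx _ ↦ (pentagonalReflection_spec hN hx).2.2)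
    (fun _ hx ↦ (pentagonalReflection_spec hN hx).1)
    (fun _ hx ↦ (pentagonalReflection_spec hN hx).2.1)

namespace PowerSeries

open Classical in
theorem coeff_pentagonalSeries_zmod_two (n : ℕ) :
    coeff n (pentagonalSeries (ZMod 2)) = if n ∈ Set.range pentagonal then 1 else 0 := by
  split_ifs with h
  · obtain ⟨k, rfl⟩ := h
    rw [coeff_pentagonalSeries_pentagonal]
    rcases Int.units_eq_one_or k.negOnePow with h | h <;> simp [h]
  · exact coeff_pentagonalSeries_eq_zero _ h

theorem coeff_pentagonalSeries_mul_expand_two (N : ℕ) :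
    coeff N (pentagonalSeries (ZMod 2) * expand 2 two_ne_zero (pentagonalSeries (ZMod 2))) =
      #(pentagonalPairs N) := by
  classical
  rw [pentagonalPairs, card_preimage, card_filter, Nat.cast_sum, coeff_mul]
  refine sum_congr rfl fun ⟨a, b⟩ _ ↦ ?_
  simp only [coeff_expand, coeff_pentagonalSeries_zmod_two, Set.mem_range, Prod.exists,
    Prod.map, Prod.mk.injEq]
  split_ifs <;> grind

theorem coeff_pentagonalSeries_pow_three_eq_zero {N : ℕ} (hN : N % 3 = 2) :
    coeff N (pentagonalSeries (ZMod 2) ^ 3) = 0 := by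
  rw [pow_succ', ← expand_zmod, coeff_pentagonalSeries_mul_expand_two,
    (ZMod.natCast_eq_zero_iff_even).2 (even_card_pentagonalPairs hN)]

end PowerSeries

namespace Nat.Partition

theorem distinctGenFun_mul_expand_six :
    distinctGenFun (ZMod 2) (fun x ↦ x % 12 ≠ 2 ∧ x % 12 ≠ 10) *
      expand 6 (by norm_num) (pentagonalSeries (ZMod 2)) = pentagonalSeries (ZMod 2) ^ 3 := by
  have hdvd (d : ℕ) (hd : d ≠ 0) :
      distinctGenFun (ZMod 2) (d ∣ ·) = expand d hd (pentagonalSeries (ZMod 2)) := by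
    rw [distinctGenFun_dvd, distinctGenFun_true_zmod_two]
  have hsq (d : ℕ) (hd : d ≠ 0) :
      distinctGenFun (ZMod 2) (d ∣ ·) ^ 2 = distinctGenFun (ZMod 2) (2 * d ∣ ·) := by
    rw [hdvd d hd, hdvd _ (by omega), ← expand_zmod, ← expand_mul]
  have hsplit : distinctGenFun (ZMod 2) (fun x ↦ x % 12 ≠ 2 ∧ x % 12 ≠ 10) =
      distinctGenFun (ZMod 2) (fun x ↦ (x % 12 ≠ 2 ∧ x % 12 ≠ 10) ∧ ¬ 6 ∣ x) *
        distinctGenFun (ZMod 2) (6 ∣ ·) := by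
    rw [← distinctGenFun_or (by omega)]
    exact distinctGenFun_congr fun x ↦ by omega
  have hregroup : distinctGenFun (ZMod 2) (fun x ↦ (x % 12 ≠ 2 ∧ x % 12 ≠ 10) ∧ ¬ 6 ∣ x) *
        distinctGenFun (ZMod 2) (12 ∣ ·) =
      distinctGenFun (ZMod 2) (¬ 2 ∣ ·) * distinctGenFun (ZMod 2) (4 ∣ ·) := by
    rw [← distinctGenFun_or (by omega), ← distinctGenFun_or (by omega)]
    exact distinctGenFun_congr fun x ↦ by omega
  have hall : distinctGenFun (ZMod 2) (¬ 2 ∣ ·) * distinctGenFun (ZMod 2) (2 ∣ ·) =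
      pentagonalSeries (ZMod 2) := by
    rw [← distinctGenFun_or (by omega)]
    exact (distinctGenFun_congr fun x ↦ iff_true_intro (em' _)).trans distinctGenFun_true_zmod_two
  calc
    _ = distinctGenFun (ZMod 2) (fun x ↦ (x % 12 ≠ 2 ∧ x % 12 ≠ 10) ∧ ¬ 6 ∣ x) *
        distinctGenFun (ZMod 2) (6 ∣ ·) ^ 2 := by
      rw [hsplit, ← hdvd, sq, mul_assoc]
    _ = distinctGenFun (ZMod 2) (¬ 2 ∣ ·) * distinctGenFun (ZMod 2) (2 ∣ ·) ^ 2 := by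
      rw [hsq 6 (by norm_num), hsq 2 two_ne_zero]
      exact hregroup
    _ = pentagonalSeries (ZMod 2) ^ 3 := by
      rw [sq, ← mul_assoc, hall, hdvd 2 two_ne_zero, expand_zmod]
      ring

end Nat.Partition

open Nat.Partition in
theorem Q_eq_card_distincts_inter_restricted (t s n : ℕ) :
    Q t s n = #(distincts n ∩ restricted n fun x ↦ x % t ≠ s % t ∧ x % t ≠ (t - s) % t) := by
  rw [Q, Nat.card_eq_fintype_card, Fintype.card_subtype]
  congr 1
  ext p
  simp [distincts, restricted]

open Nat.Partition in
theorem stmt7 (n : ℕ) : Q 12 2 (3 * n + 2) ≡ 0 [MOD 2] := by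
  set E := pentagonalSeries (ZMod 2)
  have hE : constantCoeff E ≠ 0 := by
    rw [← coeff_zero_eq_constantCoeff_apply, coeff_pentagonalSeries_zmod_two, if_pos ⟨0, rfl⟩]
    exact one_ne_zero
  have hF : distinctGenFun (ZMod 2) (fun x ↦ x % 12 ≠ 2 ∧ x % 12 ≠ 10) =
      E ^ 3 * expand 6 (by norm_num) E⁻¹ := by
    rw [← distinctGenFun_mul_expand_six, mul_assoc, ← map_mul, PowerSeries.mul_inv_cancel _ hE,
      map_one, mul_one]
  have hQ : (Q 12 2 (3 * n + 2) : ZMod 2) =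
      coeff (3 * n + 2) (distinctGenFun (ZMod 2) (fun x ↦ x % 12 ≠ 2 ∧ x % 12 ≠ 10)) := by
    rw [Q_eq_card_distincts_inter_restricted, distinctGenFun, coeff_mk]
  rw [← ZMod.natCast_eq_natCast_iff, Nat.cast_zero, hQ, hF]
  refine coeff_mul_expand_eq_zero _ (fun m hm ↦ coeff_pentagonalSeries_pow_three_eq_zero ?_) _ rfl
  simp only [Nat.ModEq] at hm
  omega
end

section
/- For every positive integer α, the generating function of Q_{4α}^α satisfies ∑_{n≥0} Q_{4α}^α(n) q^n ≡ (q;q)_∞ (q^α;q^α)_∞ (mod 2). -/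
/-- The power series whose `n`-th coefficient is the `n`-th coefficient of the
partial product `∏_{i < n+1} g i`; for products whose `i`-th factor is
`1 + O(q^(i+1))` this represents the infinite product `∏_i g i`. -/
noncomputable def prodSeries (g : ℕ → PowerSeries ℤ) : PowerSeries ℤ :=
  PowerSeries.mk fun n => PowerSeries.coeff n (∏ i ∈ Finset.range (n + 1), g i)

/-- `(q^k; q^k)_∞ = ∏_{i ≥ 1} (1 - q^(k*i))` as a formal power series over `ℤ`. -/
noncomputable def fE (k : ℕ) : PowerSeries ℤ :=
  prodSeries fun i => 1 - PowerSeries.X ^ (k * (i + 1))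

/-- `(-q^s; q^t)_∞ = ∏_{i ≥ 0} (1 + q^(s + t*i))` as a formal power series over `ℤ`. -/
noncomputable def negPoch (s t : ℕ) : PowerSeries ℤ :=
  prodSeries fun i => 1 + PowerSeries.X ^ (s + t * i)

/-!
Modulo 2 we have `1 - q^k ≡ 1 + q^k`, so `(q;q)_∞ (q^α;q^α)_∞ ≡ (-q;q)_∞ (-q^α;q^α)_∞`.
The parts excluded from `Q_{4α}^α`, those `≡ ±α (mod 4α)`, are exactly the odd multiples of `α`,
hence `(∑ Q_{4α}^α(n) q^n) · (-q^α;q^{2α})_∞ = (-q;q)_∞`. Euler's identity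
`(-q^α;q^α)_∞ (q^α;q^{2α})_∞ = 1`, read modulo 2, inverts `(-q^α;q^{2α})_∞`.
Infinite products are taken in the coefficientwise topology, over discrete coefficients.
-/

open PowerSeries Finset
open scoped PowerSeries.WithPiTopology

instance PowerSeries.instCharP {R : Type*} [Semiring R] (p : ℕ) [CharP R p] : CharP R⟦X⟧ p :=
  charP_of_injective_ringHom C_injective p

section Truncation

variable {R : Type*} [CommRing R]

theorem coeff_mul_of_X_pow_dvd_sub_one {f g : R⟦X⟧} {n : ℕ} (hg : X ^ (n + 1) ∣ g - 1) :
    coeff n (f * g) = coeff n f := by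
  obtain ⟨h, hh⟩ := hg
  rw [show f * g = f + X ^ (n + 1) * (f * h) by
      rw [← mul_assoc, mul_comm _ f, mul_assoc, ← hh]; ring,
    map_add, coeff_X_pow_mul', if_neg (by omega), add_zero]

theorem X_pow_dvd_prod_sub_one {ι : Type*} {s : Finset ι} {g : ι → R⟦X⟧} {N : ℕ}
    (hg : ∀ i ∈ s, X ^ N ∣ g i - 1) : X ^ N ∣ ∏ i ∈ s, g i - 1 := by
  refine Finset.prod_induction g (fun f => X ^ N ∣ f - 1) (fun a b ha hb => ?_)
    (by rw [sub_self]; exact dvd_zero _) hg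
  rw [show a * b - 1 = a * (b - 1) + (a - 1) by ring]
  exact dvd_add (hb.mul_left a) ha

variable [TopologicalSpace R]

theorem hasProd_of_coeff_eq_coeff_prod_range {g : ℕ → R⟦X⟧} {F : R⟦X⟧}
    (hg : ∀ i, X ^ (i + 1) ∣ g i - 1)
    (hF : ∀ n, coeff n F = coeff n (∏ i ∈ range (n + 1), g i)) : HasProd g F := by
  rw [HasProd, WithPiTopology.tendsto_iff_coeff_tendsto]
  intro n
  refine tendsto_nhds_of_eventually_eq ?_
  filter_upwards [Filter.eventually_ge_atTop (range (n + 1))] with s hs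
  rw [hF, ← prod_sdiff hs, mul_comm, coeff_mul_of_X_pow_dvd_sub_one]
  refine X_pow_dvd_prod_sub_one fun i hi => (pow_dvd_pow X ?_).trans (hg i)
  simp only [mem_sdiff, mem_range] at hi
  omega

theorem multipliable_of_X_pow_dvd_sub_one {g : ℕ → R⟦X⟧} (hg : ∀ i, X ^ (i + 1) ∣ g i - 1) :
    Multipliable g :=
  (hasProd_of_coeff_eq_coeff_prod_range (F := mk fun n => coeff n (∏ i ∈ range (n + 1), g i))
    hg fun _ => coeff_mk _ _).multipliable

theorem multipliable_one_add_X_pow_of_lt {e : ℕ → ℕ} (he : ∀ i, i < e i) :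
    Multipliable fun i => (1 + X ^ e i : R⟦X⟧) :=
  multipliable_of_X_pow_dvd_sub_one fun i => by simpa using pow_dvd_pow X (he i)

theorem multipliable_one_sub_X_pow_of_lt {e : ℕ → ℕ} (he : ∀ i, i < e i) :
    Multipliable fun i => (1 - X ^ e i : R⟦X⟧) :=
  multipliable_of_X_pow_dvd_sub_one fun i => by simpa using (pow_dvd_pow X (he i)).neg_right

theorem hasProd_map_prodSeries (φ : ℤ →+* R) {g : ℕ → ℤ⟦X⟧} (hg : ∀ i, X ^ (i + 1) ∣ g i - 1) :
    HasProd (fun i => map φ (g i)) (map φ (prodSeries g)) := by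
  refine hasProd_of_coeff_eq_coeff_prod_range (fun i => ?_) fun n => ?_
  · simpa using map_dvd (map φ) (hg i)
  · rw [coeff_map, prodSeries, coeff_mk, ← coeff_map, map_prod]

end Truncation

theorem hasProd_card_nodup_parts {R : Type*} [CommSemiring R] [TopologicalSpace R] [T2Space R]
    (p : ℕ → Prop) [DecidablePred p] :
    HasProd (fun i => if p (i + 1) then 1 + X ^ (i + 1) else 1 : ℕ → R⟦X⟧)
      (mk fun n => (Nat.card {q : n.Partition // q.parts.Nodup ∧ ∀ x ∈ q.parts, p x} : R)) := by
  convert Nat.Partition.hasProd_genFun (fun i c => if c = 1 ∧ p i then (1 : R) else 0) using 1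
  · ext1 i
    rw [tsum_eq_single 0 fun j hj => by simp [hj]]
    split_ifs <;> simp_all
  · ext n
    rw [coeff_mk, Nat.Partition.coeff_genFun, Nat.card_eq_fintype_card, Fintype.card_subtype]
    simp_rw [Finsupp.prod, prod_boole]
    simp only [Multiset.toFinsupp_support, Multiset.mem_toFinset, Multiset.toFinsupp_apply,
      sum_boole, Multiset.nodup_iff_count_eq_one, forall_and]

section Euler

variable {R : Type*} [CommRing R] [TopologicalSpace R] [T2Space R] [IsTopologicalRing R]

theorem tprod_one_add_X_pow_mul_tprod_one_sub_X_pow_odd {β : ℕ} (hβ : 0 < β) :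
    (∏' i, (1 + X ^ (β * (i + 1)) : R⟦X⟧)) * ∏' i, (1 - X ^ (β * (2 * i + 1))) = 1 := by
  have hlt : ∀ {γ : ℕ}, 0 < γ → ∀ i, i < γ * (i + 1) := fun hγ i => by nlinarith
  have hodd : Multipliable fun i => (1 - X ^ (β * (2 * i + 1)) : R⟦X⟧) :=
    multipliable_one_sub_X_pow_of_lt fun i => by nlinarith
  have heven : Multipliable fun i => (1 - X ^ (2 * β * (i + 1)) : R⟦X⟧) :=
    multipliable_one_sub_X_pow_of_lt (hlt (by omega))
  have hsplit : (∏' i, (1 - X ^ (β * (2 * i + 1)) : R⟦X⟧)) * ∏' i, (1 - X ^ (2 * β * (i + 1))) =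
      ∏' i, (1 - X ^ (β * (i + 1))) := by
    convert tprod_even_mul_odd (f := fun i => (1 - X ^ (β * (i + 1)) : R⟦X⟧)) hodd ?_ using 3
    · ring_nf
    · convert heven using 3; ring_nf
  have hsq : (∏' i, (1 + X ^ (β * (i + 1)) : R⟦X⟧)) * ∏' i, (1 - X ^ (β * (i + 1))) =
      ∏' i, (1 - X ^ (2 * β * (i + 1))) := by
    rw [← (multipliable_one_add_X_pow_of_lt (hlt hβ)).tprod_mul
      (multipliable_one_sub_X_pow_of_lt (hlt hβ))]
    exact tprod_congr fun i => by ring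
  have hunit : IsUnit (∏' i, (1 - X ^ (2 * β * (i + 1)) : R⟦X⟧)) := by
    rw [isUnit_iff_constantCoeff, heven.map_tprod _ (WithPiTopology.continuous_constantCoeff R)]
    simp [hβ.ne']
  rw [← hunit.mul_eq_right, mul_assoc, hsplit, hsq]

end Euler

theorem exists_eq_mul_odd_iff_mod {a k : ℕ} (ha : 0 < a) :
    (∃ m, k = a * (2 * m + 1)) ↔
      k % (4 * a) = a % (4 * a) ∨ k % (4 * a) = (4 * a - a) % (4 * a) := by
  rw [Nat.mod_eq_of_lt (show a < 4 * a by omega), show 4 * a - a = 3 * a by omega,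
    Nat.mod_eq_of_lt (show 3 * a < 4 * a by omega)]
  constructor
  · rintro ⟨m, rfl⟩
    obtain ⟨j, rfl | rfl⟩ := Nat.even_or_odd' m
    · left
      rw [show a * (2 * (2 * j) + 1) = a + 4 * a * j by ring, Nat.add_mul_mod_self_left,
        Nat.mod_eq_of_lt (by omega)]
    · right
      rw [show a * (2 * (2 * j + 1) + 1) = 3 * a + 4 * a * j by ring, Nat.add_mul_mod_self_left,
        Nat.mod_eq_of_lt (by omega)]
  · have hk := Nat.mod_add_div k (4 * a)
    rintro (h | h)
    · exact ⟨2 * (k / (4 * a)), by rw [h] at hk; linarith⟩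
    · exact ⟨2 * (k / (4 * a)) + 1, by rw [h] at hk; linarith⟩

theorem tprod_ite_one_add_X_pow_eq {R : Type*} [CommSemiring R] [TopologicalSpace R]
    {p : ℕ → Prop} [DecidablePred p] {e : ℕ → ℕ} (he : Function.Injective e) (he0 : ∀ m, 0 < e m)
    (hp : ∀ k, p k ↔ ∃ m, k = e m) :
    ∏' i, (if p (i + 1) then (1 + X ^ (i + 1) : R⟦X⟧) else 1) = ∏' m, (1 + X ^ e m : R⟦X⟧) := by
  have hinj : Function.Injective fun m => e m - 1 :=
    fun m m' h => he (by have := he0 m; have := he0 m'; simp only at h; omega)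
  rw [← hinj.tprod_eq]
  · exact tprod_congr fun m => by simp [Nat.sub_add_cancel (he0 m), hp]
  · intro i hi
    obtain ⟨m, hm⟩ := (hp (i + 1)).mp (by by_contra h; simp [h] at hi)
    exact ⟨m, by simp only; omega⟩

theorem map_fE_eq_tprod {R : Type*} [CommRing R] [CharP R 2] [TopologicalSpace R] [T2Space R]
    {k : ℕ} (hk : 0 < k) :
    map (Int.castRingHom R) (fE k) = ∏' i, (1 + X ^ (k * (i + 1)) : R⟦X⟧) := by
  have hdvd : ∀ i, X ^ (i + 1) ∣ (1 - X ^ (k * (i + 1)) : ℤ⟦X⟧) - 1 := fun i => by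
    simpa using (pow_dvd_pow X (show i + 1 ≤ k * (i + 1) by nlinarith)).neg_right
  rw [fE, ← (hasProd_map_prodSeries _ hdvd).tprod_eq]
  simp [CharTwo.sub_eq_add]

theorem map_mk_Q_eq_map_fE_mul_fE {α : ℕ} (hα : 0 < α) :
    map (Int.castRingHom (ZMod 2)) (mk fun m => (Q (4 * α) α m : ℤ)) =
      map (Int.castRingHom (ZMod 2)) (fE 1 * fE α) := by
  set P : ℕ → Prop := fun k => k % (4 * α) ≠ α % (4 * α) ∧ k % (4 * α) ≠ (4 * α - α) % (4 * α)
  have hallowed := hasProd_card_nodup_parts (R := ZMod 2) P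
  have hforbidden := hasProd_card_nodup_parts (R := ZMod 2) (¬ P ·)
  have hsplit : (∏' i, if P (i + 1) then (1 + X ^ (i + 1) : (ZMod 2)⟦X⟧) else 1) *
      (∏' i, if ¬ P (i + 1) then (1 + X ^ (i + 1) : (ZMod 2)⟦X⟧) else 1) =
      ∏' i, (1 + X ^ (1 * (i + 1))) := by
    rw [← hallowed.multipliable.tprod_mul hforbidden.multipliable]
    exact tprod_congr fun i => by split_ifs <;> simp
  have hodd : (∏' i, if ¬ P (i + 1) then (1 + X ^ (i + 1) : (ZMod 2)⟦X⟧) else 1) =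
      ∏' m, (1 + X ^ (α * (2 * m + 1))) :=
    tprod_ite_one_add_X_pow_eq (p := (¬ P ·)) (e := fun m => α * (2 * m + 1))
      (fun m m' h => by simpa [hα.ne'] using h) (fun m => Nat.mul_pos hα (by omega))
      fun k => by simp only [P, not_and_or, not_not, exists_eq_mul_odd_iff_mod hα]
  have heuler : (∏' m, (1 + X ^ (α * (2 * m + 1)))) * ∏' i, (1 + X ^ (α * (i + 1))) =
      (1 : (ZMod 2)⟦X⟧) := by
    rw [mul_comm]
    simpa only [CharTwo.sub_eq_add] using
      tprod_one_add_X_pow_mul_tprod_one_sub_X_pow_odd (R := ZMod 2) hα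
  rw [map_mul, map_fE_eq_tprod one_pos, map_fE_eq_tprod hα, ← hsplit, hodd, mul_assoc, heuler,
    mul_one, hallowed.tprod_eq]
  ext n
  simp [Q, P]

theorem stmt11 (α : ℕ) (hα : 0 < α) (n : ℕ) :
    PowerSeries.coeff n (PowerSeries.mk fun m => (Q (4 * α) α m : ℤ)) ≡
      PowerSeries.coeff n (fE 1 * fE α) [ZMOD 2] := by
  have h := congrArg (coeff n) (map_mk_Q_eq_map_fE_mul_fE hα)
  rw [coeff_map, coeff_map] at h
  exact (ZMod.intCast_eq_intCast_iff _ _ 2).mp h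
end
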